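/- For X = (a, A⁺, A⁻) ∈ G, the operator D_X maps the sextonion subspace S into itself if and only if a₁₂ = a₃₁ = a₃₂ = 0, A⁺₃ = 0 and A⁻₂ = 0. -/

import Mathlib

open Matrix

/-- 3-component complex vectors. -/
abbrev V3 := Fin 3 → ℂ

/-- The standard cross product on ℂ³. -/
def cross (A B : V3) : V3 := crossProduct A B

/-- The Zorn vector-matrix algebra over ℂ: elements x = (α⁺, A⁺, A⁻, α⁻). -/
abbrev Zorn := ℂ × V3 × V3 × ℂ

/-- The Zorn product
x·y = (α⁺β⁺ − ⟨A⁺,B⁻⟩, α⁺B⁺ + β⁻A⁺ + A⁻×B⁻, β⁺A⁻ + α⁻B⁻ + A⁺×B⁺, α⁻β⁻ − ⟨A⁻,B⁺⟩). -/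
noncomputable def zmul (x y : Zorn) : Zorn :=
  ( x.1 * y.1 - x.2.1 ⬝ᵥ y.2.2.1,
    x.1 • y.2.1 + y.2.2.2 • x.2.1 + cross x.2.2.1 y.2.2.1,
    y.1 • x.2.2.1 + x.2.2.2 • y.2.2.1 + cross x.2.1 y.2.1,
    x.2.2.2 * y.2.2.2 - x.2.2.1 ⬝ᵥ y.2.1 )

/-- The unit 1 = (1,0,0,1) of the Zorn algebra. -/
noncomputable def zunit : Zorn := (1, 0, 0, 1)

/-- Membership in the sextonion subspace S : A⁺₃ = 0 and A⁻₂ = 0. -/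
def inS (x : Zorn) : Prop := x.2.1 2 = 0 ∧ x.2.2.1 1 = 0

/-- The sextonion subspace S as a ℂ-submodule of the Zorn algebra. -/
noncomputable def Ssub : Submodule ℂ Zorn where
  carrier := {x | inS x}
  add_mem' := by
    rintro x y ⟨hx1, hx2⟩ ⟨hy1, hy2⟩
    exact ⟨by simp [inS, Prod.fst_add, Prod.snd_add, Pi.add_apply, hx1, hy1],
           by simp [inS, Prod.fst_add, Prod.snd_add, Pi.add_apply, hx2, hy2]⟩
  zero_mem' := ⟨rfl, rfl⟩
  smul_mem' := by
    rintro c x ⟨hx1, hx2⟩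
    exact ⟨by simp [inS, Prod.smul_fst, Prod.smul_snd, Pi.smul_apply, hx1],
           by simp [inS, Prod.smul_fst, Prod.smul_snd, Pi.smul_apply, hx2]⟩

/-- ρ⁺ = (1,0,0,0). -/
noncomputable def rhoP : Zorn := (1, 0, 0, 0)
/-- ρ⁻ = (0,0,0,1). -/
noncomputable def rhoM : Zorn := (0, 0, 0, 1)
/-- ε_k⁺ = (0, e_k, 0, 0). -/
noncomputable def epsP (k : Fin 3) : Zorn := (0, Pi.single k 1, 0, 0)
/-- ε_k⁻ = (0, 0, e_k, 0). -/
noncomputable def epsM (k : Fin 3) : Zorn := (0, 0, Pi.single k 1, 0)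

abbrev M3 := Matrix (Fin 3) (Fin 3) ℂ

/-- Elements of the matrix realization G of g₂: triples X = (a, A⁺, A⁻). -/
abbrev GC := M3 × V3 × V3

/-- The product A⁺∘B⁻ := tr(A⁺B⁻)·I − 3·A⁺B⁻, with A⁺B⁻ the outer product. -/
noncomputable def circ (A B : V3) : M3 := (A ⬝ᵥ B) • (1 : M3) - (3 : ℂ) • vecMulVec A B

/-- The g₂ bracket on G:
[X,Y] = ([a,b] + A⁺∘B⁻ − B⁺∘A⁻, aB⁺ − bA⁺ + 2 A⁻×B⁻, A⁻b − B⁻a + 2 A⁺×B⁺). -/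
noncomputable def gbr (X Y : GC) : GC :=
  ( X.1 * Y.1 - Y.1 * X.1 + circ X.2.1 Y.2.2 - circ Y.2.1 X.2.2,
    X.1 *ᵥ Y.2.1 - Y.1 *ᵥ X.2.1 + (2 : ℂ) • cross X.2.2 Y.2.2,
    X.2.2 ᵥ* Y.1 - Y.2.2 ᵥ* X.1 + (2 : ℂ) • cross X.2.1 Y.2.1 )

/-- m′ : the matrix m with its (2,3)-entry (0-based: (1,2)) replaced by 0. -/
def prime (m : M3) : M3 := fun i j => if i = 1 ∧ j = 2 then 0 else m i j

/-- The constrained product S⁺∘′R⁻ := tr(S⁺R⁻)·I − 3·(S⁺R⁻)′. -/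
noncomputable def circ' (A B : V3) : M3 :=
  (A ⬝ᵥ B) • (1 : M3) - (3 : ℂ) • prime (vecMulVec A B)

/-- The bracket of the derivation algebra g = Der(𝕊) of the sextonions:
[(a,S⁺,S⁻),(b,R⁺,R⁻)] = ( ([a,b])′ + S⁺∘′R⁻ − R⁺∘′S⁻ ,
  aR⁺ − bS⁺ + 2 S⁻×R⁻ , S⁻b − R⁻a + 2 S⁺×R⁺ ). -/
noncomputable def gbr' (X Y : GC) : GC :=
  ( prime (X.1 * Y.1 - Y.1 * X.1) + circ' X.2.1 Y.2.2 - circ' Y.2.1 X.2.2,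
    X.1 *ᵥ Y.2.1 - Y.1 *ᵥ X.2.1 + (2 : ℂ) • cross X.2.2 Y.2.2,
    X.2.2 ᵥ* Y.1 - Y.2.2 ᵥ* X.1 + (2 : ℂ) • cross X.2.1 Y.2.1 )

/-- Membership in g = Der(𝕊):
a₁₂ = a₂₃ = a₃₁ = a₃₂ = 0 (1-based), tr a = 0, S⁺₃ = 0, S⁻₂ = 0. -/
def ing (X : GC) : Prop :=
  X.1 0 1 = 0 ∧ X.1 1 2 = 0 ∧ X.1 2 0 = 0 ∧ X.1 2 1 = 0 ∧ X.1.trace = 0 ∧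
  X.2.1 2 = 0 ∧ X.2.2 1 = 0

/-- g = Der(𝕊) as a ℂ-submodule. -/
noncomputable def gsub : Submodule ℂ GC where
  carrier := {X | ing X}
  add_mem' := by
    rintro X Y ⟨h1, h2, h3, h4, h5, h6, h7⟩ ⟨g1, g2, g3, g4, g5, g6, g7⟩
    refine ⟨?_, ?_, ?_, ?_, ?_, ?_, ?_⟩ <;>
      simp [Prod.fst_add, Prod.snd_add, Matrix.add_apply, Matrix.trace_add, Pi.add_apply, *]
  zero_mem' := by
    refine ⟨rfl, rfl, rfl, rfl, ?_, rfl, rfl⟩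
    simp
  smul_mem' := by
    rintro c X ⟨h1, h2, h3, h4, h5, h6, h7⟩
    refine ⟨?_, ?_, ?_, ?_, ?_, ?_, ?_⟩ <;>
      simp [Prod.smul_fst, Prod.smul_snd, Matrix.smul_apply, Matrix.trace_smul, Pi.smul_apply, *]

/-- For X = (a, A⁺, A⁻) ∈ G, the linear operator D_X on the Zorn algebra:
D_X(α⁺, v⁺, v⁻, α⁻) = ( −⟨A⁺, v⁻⟩ + ⟨A⁻, v⁺⟩ , a v⁺ + (α⁻ − α⁺)A⁺ − A⁻×v⁻ ,
  −v⁻a − (α⁻ − α⁺)A⁻ − A⁺×v⁺ , ⟨A⁺, v⁻⟩ − ⟨A⁻, v⁺⟩ ). -/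
noncomputable def Dmap (X : GC) (z : Zorn) : Zorn :=
  ( -(X.2.1 ⬝ᵥ z.2.2.1) + X.2.2 ⬝ᵥ z.2.1,
    X.1 *ᵥ z.2.1 + (z.2.2.2 - z.1) • X.2.1 - cross X.2.2 z.2.2.1,
    -(z.2.2.1 ᵥ* X.1) - (z.2.2.2 - z.1) • X.2.2 - cross X.2.1 z.2.1,
    X.2.1 ⬝ᵥ z.2.2.1 - X.2.2 ⬝ᵥ z.2.1 )

/- On `S` (where `v⁺₃ = v⁻₂ = 0`) the two coordinates of `D_X z` that membership in `S`
constrains are linear forms in `z` whose coefficients are exactly `a₃₁, a₃₂, A⁺₃, A⁻₂` and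
`a₁₂, a₃₂, A⁻₂, A⁺₃`. Such a form vanishes on `S` iff its coefficients vanish, as one sees on
the basis vectors `ρ⁻, ε₁⁺, ε₂⁺, ε₁⁻` of `S`. -/

lemma Dmap_snd_fst_two_of_inS (X : GC) {z : Zorn} (hz : inS z) :
    (Dmap X z).2.1 2 = X.1 2 0 * z.2.1 0 + X.1 2 1 * z.2.1 1 + (z.2.2.2 - z.1) * X.2.1 2
      + X.2.2 1 * z.2.2.1 0 := by
  obtain ⟨hz₁, hz₂⟩ := hz
  simp [Dmap, cross, cross_apply, mulVec, dotProduct, vecHead, vecTail, Fin.sum_univ_three,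
    hz₁, hz₂]

lemma Dmap_snd_snd_fst_one_of_inS (X : GC) {z : Zorn} (hz : inS z) :
    (Dmap X z).2.2.1 1 = -(z.2.2.1 0 * X.1 0 1 + z.2.2.1 2 * X.1 2 1
      + (z.2.2.2 - z.1) * X.2.2 1 + X.2.1 2 * z.2.1 0) := by
  obtain ⟨hz₁, hz₂⟩ := hz
  simp [Dmap, cross, cross_apply, vecMul, dotProduct, vecHead, vecTail, Fin.sum_univ_three,
    hz₁, hz₂]
  ring

/-- for X = (a, A⁺, A⁻) ∈ G, the operator D_X maps the sextonion
subspace S into itself iff a₁₂ = a₃₁ = a₃₂ = 0 (1-based), A⁺₃ = 0 and A⁻₂ = 0. -/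
theorem Dmap_preserves_sextonions_iff :
    ∀ X : GC, X.1.trace = 0 →
      ((∀ z : Zorn, inS z → inS (Dmap X z)) ↔
        (X.1 0 1 = 0 ∧ X.1 2 0 = 0 ∧ X.1 2 1 = 0 ∧ X.2.1 2 = 0 ∧ X.2.2 1 = 0)) := by
  intro X _
  constructor
  · intro h
    have forms_vanish {z : Zorn} (hz : inS z) := (h z hz).imp
      (Dmap_snd_fst_two_of_inS X hz ▸ ·) (Dmap_snd_snd_fst_one_of_inS X hz ▸ ·)
    have hρM := forms_vanish (z := rhoM) ⟨rfl, rfl⟩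
    have hεP₀ := forms_vanish (z := epsP 0) ⟨rfl, rfl⟩
    have hεP₁ := forms_vanish (z := epsP 1) ⟨rfl, rfl⟩
    have hεM₀ := forms_vanish (z := epsM 0) ⟨rfl, rfl⟩
    simp [rhoM, epsP, epsM] at hρM hεP₀ hεP₁ hεM₀
    exact ⟨hεM₀.2, hεP₀.1, hεP₁, hρM.1, hρM.2⟩
  · rintro ⟨h₀₁, h₂₀, h₂₁, hA₂, hB₁⟩ z hz
    constructor
    · simp [Dmap_snd_fst_two_of_inS X hz, h₂₀, h₂₁, hA₂, hB₁]
    · simp [Dmap_snd_snd_fst_one_of_inS X hz, h₀₁, h₂₁, hA₂, hB₁]
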